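/- Let G and H be trees (with at least one edge each). Then |E(G)|·|E(H)| + 1 ≤ mc(G □ H) ≤ |E(G)|·|E(H)| + 2. -/

import Mathlib

/-!
Lower bound: give a spanning tree of `G □ H` a single color and every other edge a color of its
own; this MC-coloring uses `|E| - |V| + 2 = |E(G)||E(H)| + 1` colors.

Upper bound: in an MC-coloring with `t` colors, every ordered pair of distinct vertices lies in a
component of some color class. A graph on `n` vertices with `e ≥ 1` edges has at most
`e * min n (e + 1)` such pairs, because each component has at most one vertex more than edges.
Summing over the color classes gives `(n - 1) * (n + t) ≤ (n + 1) * |E|`. With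
`a = |E(G)| ≥ 1` and `b = |E(H)|` we have `n = (a + 1)(b + 1)` and `|E| = 2ab + a + b`,
which forces `t ≤ ab + 2`.
-/

open SimpleGraph

/-- An edge-coloring `c` of `G` is a *monochromatic connection coloring* (MC-coloring)
if any two vertices of `G` are joined by a monochromatic walk, i.e. a walk all of whose
edges receive the same color. -/
def SimpleGraph.IsMCColoring {V : Type*} (G : SimpleGraph V) (c : Sym2 V → ℕ) : Prop :=
  ∀ u v : V, ∃ w : G.Walk u v, ∃ k : ℕ, ∀ e ∈ w.edges, c e = k

/-- The *monochromatic connection number* `mc G`: the maximum number of colors used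
on the edges of `G` by an MC-coloring of `G`. -/
noncomputable def SimpleGraph.mc {V : Type*} (G : SimpleGraph V) : ℕ :=
  sSup {n | ∃ c : Sym2 V → ℕ, G.IsMCColoring c ∧ (c '' G.edgeSet).ncard = n}

/-- The lexicographic product `G ∘ H`: `(g,h)` and `(g',h')` are adjacent iff
`gg' ∈ E(G)`, or `g = g'` and `hh' ∈ E(H)`. -/
def SimpleGraph.lexProd {α β : Type*} (G : SimpleGraph α) (H : SimpleGraph β) :
    SimpleGraph (α × β) where
  Adj x y := G.Adj x.1 y.1 ∨ (x.1 = y.1 ∧ H.Adj x.2 y.2)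
  symm := by
    constructor
    rintro x y (h | ⟨h1, h2⟩)
    · exact Or.inl h.symm
    · exact Or.inr ⟨h1.symm, h2.symm⟩
  loopless := by
    constructor
    rintro x (h | ⟨-, h⟩)
    · exact G.loopless.irrefl _ h
    · exact H.loopless.irrefl _ h

/-- The strong product `G ⊠ H`: `(g,h)` and `(g',h')` are adjacent iff
`gg' ∈ E(G)` and `h = h'`, or `g = g'` and `hh' ∈ E(H)`, or `gg' ∈ E(G)` and `hh' ∈ E(H)`. -/
def SimpleGraph.strongProd {α β : Type*} (G : SimpleGraph α) (H : SimpleGraph β) :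
    SimpleGraph (α × β) where
  Adj x y := (G.Adj x.1 y.1 ∧ x.2 = y.2) ∨ (x.1 = y.1 ∧ H.Adj x.2 y.2) ∨
      (G.Adj x.1 y.1 ∧ H.Adj x.2 y.2)
  symm := by
    constructor
    rintro x y (⟨h1, h2⟩ | ⟨h1, h2⟩ | ⟨h1, h2⟩)
    · exact Or.inl ⟨h1.symm, h2.symm⟩
    · exact Or.inr (Or.inl ⟨h1.symm, h2.symm⟩)
    · exact Or.inr (Or.inr ⟨h1.symm, h2.symm⟩)
  loopless := by
    constructor
    rintro x (⟨h, -⟩ | ⟨-, h⟩ | ⟨h, -⟩)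
    · exact G.loopless.irrefl _ h
    · exact H.loopless.irrefl _ h
    · exact G.loopless.irrefl _ h

/-- The direct (tensor) product `G × H`: `(g,h)` and `(g',h')` are adjacent iff
`gg' ∈ E(G)` and `hh' ∈ E(H)`. -/
def SimpleGraph.tensorProd {α β : Type*} (G : SimpleGraph α) (H : SimpleGraph β) :
    SimpleGraph (α × β) where
  Adj x y := G.Adj x.1 y.1 ∧ H.Adj x.2 y.2
  symm := by
    constructor
    rintro x y ⟨h1, h2⟩
    exact ⟨h1.symm, h2.symm⟩
  loopless := by
    constructor
    rintro x ⟨h, -⟩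
    exact G.loopless.irrefl _ h

/-- The Cartesian (box) product of a finite family of graphs: two tuples are adjacent
iff they agree in all coordinates but one, where they are adjacent. -/
def SimpleGraph.piBoxProd {n : ℕ} {V : Fin n → Type*} (G : ∀ i, SimpleGraph (V i)) :
    SimpleGraph (∀ i, V i) where
  Adj x y := ∃ i, (G i).Adj (x i) (y i) ∧ ∀ j, j ≠ i → x j = y j
  symm := by
    constructor
    rintro x y ⟨i, hadj, heq⟩
    exact ⟨i, hadj.symm, fun j hj => (heq j hj).symm⟩
  loopless := by
    constructor
    rintro x ⟨i, hadj, -⟩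
    exact (G i).loopless.irrefl _ hadj

/-- The (iterated, left-associated) lexicographic product of a finite family of graphs:
two tuples are adjacent iff at the least coordinate where they differ,
they are adjacent. -/
def SimpleGraph.piLexProd {n : ℕ} {V : Fin n → Type*} (G : ∀ i, SimpleGraph (V i)) :
    SimpleGraph (∀ i, V i) where
  Adj x y := ∃ i, (G i).Adj (x i) (y i) ∧ ∀ j, j < i → x j = y j
  symm := by
    constructor
    rintro x y ⟨i, hadj, heq⟩
    exact ⟨i, hadj.symm, fun j hj => (heq j hj).symm⟩
  loopless := by
    constructor
    rintro x ⟨i, hadj, -⟩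
    exact (G i).loopless.irrefl _ hadj

open Finset

namespace SimpleGraph

variable {V : Type*}

lemma ncard_edgeSet_eq_card_edgeFinset (G : SimpleGraph V) [Fintype G.edgeSet] :
    G.edgeSet.ncard = #G.edgeFinset := by
  rw [← coe_edgeFinset, Set.ncard_coe_finset]

lemma IsTree.ncard_edgeSet_add_one [Fintype V] {T : SimpleGraph V} (hT : T.IsTree) :
    T.edgeSet.ncard + 1 = Fintype.card V := by
  classical
  rw [ncard_edgeSet_eq_card_edgeFinset]
  exact hT.card_edgeFinset

def edgeColorClass (F : SimpleGraph V) (c : Sym2 V → ℕ) (k : ℕ) : SimpleGraph V :=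
  F.deleteEdges {e | c e ≠ k}

lemma edgeSet_edgeColorClass (F : SimpleGraph V) (c : Sym2 V → ℕ) (k : ℕ) :
    (F.edgeColorClass c k).edgeSet = {e ∈ F.edgeSet | c e = k} := by
  ext e
  simp [edgeColorClass, edgeSet_deleteEdges]

section Reachable

variable (K : SimpleGraph V)

lemma ncard_reachable_le_ncard_edges_add_one [Finite V] (u : V) :
    {v | K.Reachable u v}.ncard ≤ {e ∈ K.edgeSet | ∀ x ∈ e, K.Reachable u x}.ncard + 1 := by
  set C := K.connectedComponentMk u
  have hverts : Nat.card C = {v | K.Reachable u v}.ncard := by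
    refine (Nat.card_coe_set_eq C.supp).trans (congrArg Set.ncard ?_)
    ext v
    simp [C, ConnectedComponent.eq, reachable_comm]
  have hedges : Nat.card C.toSimpleGraph.edgeSet ≤
      {e ∈ K.edgeSet | ∀ x ∈ e, K.Reachable u x}.ncard := by
    rw [Nat.card_coe_set_eq]
    refine Set.ncard_le_ncard_of_injOn (Sym2.map Subtype.val) ?_
      (Sym2.map.injective Subtype.val_injective).injOn (Set.toFinite _)
    intro e he
    induction e using Sym2.ind with
    | _ a b =>
      refine ⟨he, ?_⟩
      simp only [Sym2.map_mk, Sym2.mem_iff, forall_eq_or_imp, forall_eq]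
      exact ⟨C.reachable_of_mem_supp ConnectedComponent.connectedComponentMk_mem a.2,
        C.reachable_of_mem_supp ConnectedComponent.connectedComponentMk_mem b.2⟩
  have := C.connected_toSimpleGraph.card_vert_le_card_edgeSet_add_one
  omega

lemma ncard_forall_mem_reachable_le [Fintype V] (e : Sym2 V) :
    {u | ∀ x ∈ e, K.Reachable u x}.ncard ≤ min (Fintype.card V) (K.edgeSet.ncard + 1) := by
  induction e using Sym2.ind with
  | _ a b =>
    have hsub : {u | ∀ x ∈ s(a, b), K.Reachable u x}.ncard ≤ {v | K.Reachable a v}.ncard :=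
      Set.ncard_le_ncard fun u hu => (hu a (Sym2.mem_mk_left a b)).symm
    have hcomp : {e ∈ K.edgeSet | ∀ x ∈ e, K.Reachable a x}.ncard ≤ K.edgeSet.ncard :=
      Set.ncard_le_ncard fun e he => he.1
    have huniv := Set.ncard_le_card {u | ∀ x ∈ s(a, b), K.Reachable u x}
    have := K.ncard_reachable_le_ncard_edges_add_one a
    rw [Nat.card_eq_fintype_card] at huniv
    omega

theorem sum_ncard_reachable_ne_le [Fintype V] :
    ∑ u, {v | u ≠ v ∧ K.Reachable u v}.ncard ≤
      K.edgeSet.ncard * min (Fintype.card V) (K.edgeSet.ncard + 1) := by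
  classical
  let P : V → Sym2 V → Prop := fun u e => ∀ x ∈ e, K.Reachable u x
  calc ∑ u, {v | u ≠ v ∧ K.Reachable u v}.ncard
      ≤ ∑ u, #(K.edgeFinset.bipartiteAbove P u) := by
        gcongr with u
        have hins : {v | K.Reachable u v} = insert u {v | u ≠ v ∧ K.Reachable u v} := by
          ext v
          by_cases h : u = v
          · simp [h]
          · simp [h, Ne.symm h]
        have := K.ncard_reachable_le_ncard_edges_add_one u
        rw [hins, Set.ncard_insert_of_notMem (by simp)] at this
        rw [← Set.ncard_coe_finset, coe_bipartiteAbove]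
        simpa [P] using this
    _ = ∑ e ∈ K.edgeFinset, #(univ.bipartiteBelow P e) :=
        sum_card_bipartiteAbove_eq_sum_card_bipartiteBelow P
    _ ≤ ∑ e ∈ K.edgeFinset, min (Fintype.card V) (K.edgeSet.ncard + 1) := by
        gcongr with e
        rw [← Set.ncard_coe_finset, coe_bipartiteBelow]
        simpa [P] using K.ncard_forall_mem_reachable_le e
    _ = _ := by rw [sum_const, smul_eq_mul, ncard_edgeSet_eq_card_edgeFinset]

theorem sum_ncard_reachable_ne_add_card_le [Fintype V] (hK : K.edgeSet.Nonempty) :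
    ∑ u, {v | u ≠ v ∧ K.Reachable u v}.ncard + Fintype.card V ≤
      (Fintype.card V + 1) * K.edgeSet.ncard + 1 := by
  have hpairs := K.sum_ncard_reachable_ne_le
  have hpos : 1 ≤ K.edgeSet.ncard := (Set.ncard_pos (Set.toFinite _)).mpr hK
  set n := Fintype.card V
  set e := K.edgeSet.ncard
  rcases le_total n (e + 1) with h | h
  · rw [min_eq_left h] at hpairs
    nlinarith
  · rw [min_eq_right h] at hpairs
    obtain ⟨d, hd⟩ := Nat.exists_eq_add_of_le h
    rw [hd]
    nlinarith [Nat.mul_le_mul_left d hpos]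

end Reachable

section MCColoring

variable {F : SimpleGraph V} {c : Sym2 V → ℕ}

lemma Connected.isMCColoring_const (hF : F.Connected) (k : ℕ) : F.IsMCColoring fun _ => k :=
  fun u v => ⟨(hF u v).some, k, fun _ _ => rfl⟩

lemma IsMCColoring.exists_reachable_edgeColorClass (hc : F.IsMCColoring c) {u v : V}
    (huv : u ≠ v) : ∃ k ∈ c '' F.edgeSet, (F.edgeColorClass c k).Reachable u v := by
  obtain ⟨w, k, hw⟩ := hc u v
  have hne : w.edges ≠ [] := fun h => huv (Walk.edges_eq_nil.mp h).eq
  obtain ⟨e, he⟩ := List.exists_mem_of_ne_nil _ hne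
  refine ⟨k, ⟨e, w.edges_subset_edgeSet he, hw e he⟩, ⟨w.transfer _ fun e he => ?_⟩⟩
  rw [edgeSet_edgeColorClass]
  exact ⟨w.edges_subset_edgeSet he, hw e he⟩

lemma ncard_image_edgeSet_eq_card_image [Fintype F.edgeSet] :
    (c '' F.edgeSet).ncard = #(F.edgeFinset.image c) := by
  rw [← coe_edgeFinset, ← coe_image, Set.ncard_coe_finset]

lemma sum_ncard_edgeSet_edgeColorClass [Fintype F.edgeSet] :
    ∑ k ∈ F.edgeFinset.image c, (F.edgeColorClass c k).edgeSet.ncard = F.edgeSet.ncard := by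
  classical
  rw [ncard_edgeSet_eq_card_edgeFinset,
    card_eq_sum_card_fiberwise fun e he => mem_image_of_mem c he]
  refine sum_congr rfl fun k _ => ?_
  rw [edgeSet_edgeColorClass, ← Set.ncard_coe_finset, coe_filter]
  simp only [mem_edgeFinset]

lemma IsMCColoring.card_sub_one_le_sum [Fintype V] [Fintype F.edgeSet] (hc : F.IsMCColoring c)
    (u : V) :
    Fintype.card V - 1 ≤
      ∑ k ∈ F.edgeFinset.image c, {v | u ≠ v ∧ (F.edgeColorClass c k).Reachable u v}.ncard := by
  classical
  have hsub : {v | u ≠ v} ⊆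
      ⋃ k ∈ F.edgeFinset.image c, {v | u ≠ v ∧ (F.edgeColorClass c k).Reachable u v} := by
    intro v huv
    obtain ⟨k, hk, hreach⟩ := hc.exists_reachable_edgeColorClass huv
    rw [← coe_edgeFinset, ← coe_image] at hk
    exact Set.mem_biUnion hk ⟨huv, hreach⟩
  have hcompl : {v | u ≠ v} = {u}ᶜ := by
    ext
    simp [eq_comm]
  calc Fintype.card V - 1 = {v | u ≠ v}.ncard := by
        rw [hcompl, Set.ncard_compl, Set.ncard_singleton, Nat.card_eq_fintype_card]
    _ ≤ _ := (Set.ncard_le_ncard hsub).trans (set_ncard_biUnion_le _ _)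

theorem IsMCColoring.card_sub_one_mul_le [Fintype V] (hc : F.IsMCColoring c) :
    (Fintype.card V - 1) * (Fintype.card V + (c '' F.edgeSet).ncard) ≤
      (Fintype.card V + 1) * F.edgeSet.ncard := by
  classical
  set n := Fintype.card V
  set S := F.edgeFinset.image c
  let r : ℕ → V → ℕ := fun k u => {v | u ≠ v ∧ (F.edgeColorClass c k).Reachable u v}.ncard
  have hpairs : n * (n - 1) ≤ ∑ k ∈ S, ∑ u, r k u := by
    calc n * (n - 1) = ∑ _u : V, (n - 1) := by rw [sum_const, card_univ, smul_eq_mul]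
      _ ≤ ∑ u, ∑ k ∈ S, r k u := sum_le_sum fun u _ => hc.card_sub_one_le_sum u
      _ = ∑ k ∈ S, ∑ u, r k u := sum_comm
  have hclass : ∑ k ∈ S, (∑ u, r k u + n) ≤
      ∑ k ∈ S, ((n + 1) * (F.edgeColorClass c k).edgeSet.ncard + 1) := by
    refine sum_le_sum fun k hk => sum_ncard_reachable_ne_add_card_le _ ?_
    obtain ⟨e, he, rfl⟩ := mem_image.mp hk
    exact ⟨e, by rw [edgeSet_edgeColorClass]; exact ⟨mem_edgeFinset.mp he, rfl⟩⟩
  rw [sum_add_distrib, sum_add_distrib, ← mul_sum, sum_ncard_edgeSet_edgeColorClass, sum_const,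
    sum_const, smul_eq_mul, smul_eq_mul, mul_one] at hclass
  rw [ncard_image_edgeSet_eq_card_image]
  rcases n with _ | n
  · simp
  · simp only [Nat.add_sub_cancel] at hpairs ⊢
    nlinarith

end MCColoring

section MonochromaticConnectionNumber

variable [Fintype V] {F : SimpleGraph V}

lemma bddAbove_ncard_image_of_isMCColoring :
    BddAbove {n | ∃ c : Sym2 V → ℕ, F.IsMCColoring c ∧ (c '' F.edgeSet).ncard = n} :=
  ⟨F.edgeSet.ncard, by rintro _ ⟨c, -, rfl⟩; exact Set.ncard_image_le (Set.toFinite _)⟩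

lemma IsMCColoring.ncard_image_le_mc {c : Sym2 V → ℕ} (hc : F.IsMCColoring c) :
    (c '' F.edgeSet).ncard ≤ F.mc :=
  le_csSup bddAbove_ncard_image_of_isMCColoring ⟨c, hc, rfl⟩

lemma Connected.exists_isMCColoring_ncard_eq_mc (hF : F.Connected) :
    ∃ c : Sym2 V → ℕ, F.IsMCColoring c ∧ (c '' F.edgeSet).ncard = F.mc := by
  have hne : {n | ∃ c : Sym2 V → ℕ, F.IsMCColoring c ∧ (c '' F.edgeSet).ncard = n}.Nonempty :=
    ⟨_, fun _ => 0, hF.isMCColoring_const 0, rfl⟩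
  exact Nat.sSup_mem hne bddAbove_ncard_image_of_isMCColoring

theorem Connected.card_sub_one_mul_le (hF : F.Connected) :
    (Fintype.card V - 1) * (Fintype.card V + F.mc) ≤ (Fintype.card V + 1) * F.edgeSet.ncard := by
  obtain ⟨c, hc, hmc⟩ := hF.exists_isMCColoring_ncard_eq_mc
  exact hmc ▸ hc.card_sub_one_mul_le

theorem Connected.add_two_le_mc_add_card [Nontrivial V] (hF : F.Connected) :
    F.edgeSet.ncard + 2 ≤ F.mc + Fintype.card V := by
  classical
  obtain ⟨T, hTF, hT⟩ := hF.exists_isTree_le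
  obtain ⟨code, hcode⟩ := Countable.exists_injective_nat (Sym2 V)
  let c : Sym2 V → ℕ := fun e => if e ∈ T.edgeSet then 0 else code e + 1
  have hc : F.IsMCColoring c := fun u v =>
    ⟨(hT.connected u v).some.mapLe hTF, 0, fun e he => by
      rw [Walk.edges_mapLe_eq_edges] at he
      simp [c, (hT.connected u v).some.edges_subset_edgeSet he]⟩
  have hTcard := hT.ncard_edgeSet_add_one
  have hTF' : T.edgeSet ⊆ F.edgeSet := edgeSet_mono hTF
  obtain ⟨e₀, he₀⟩ : T.edgeSet.Nonempty := by
    rw [← Set.ncard_pos (Set.toFinite _)]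
    have := Fintype.one_lt_card (α := V)
    omega
  have hsub : insert 0 (c '' (F.edgeSet \ T.edgeSet)) ⊆ c '' F.edgeSet :=
    Set.insert_subset ⟨e₀, hTF' he₀, if_pos he₀⟩ (Set.image_mono Set.sdiff_subset)
  have h0 : 0 ∉ c '' (F.edgeSet \ T.edgeSet) := by
    rintro ⟨e, he, hce⟩
    simp [c, he.2] at hce
  have hinj : Set.InjOn c (F.edgeSet \ T.edgeSet) := fun e he e' he' hee =>
    hcode (by simpa [c, he.2, he'.2] using hee)
  have hcount := Set.ncard_le_ncard hsub
  rw [Set.ncard_insert_of_notMem h0, hinj.ncard_image,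
    Set.ncard_sdiff hTF'] at hcount
  have := Set.ncard_le_ncard hTF'
  have := hc.ncard_image_le_mc
  omega

end MonochromaticConnectionNumber

theorem ncard_edgeSet_boxProd {α β : Type*} [Fintype α] [Fintype β] (G : SimpleGraph α)
    (H : SimpleGraph β) :
    (G □ H).edgeSet.ncard =
      Fintype.card β * G.edgeSet.ncard + Fintype.card α * H.edgeSet.ncard := by
  classical
  have : 2 * (G □ H).edgeSet.ncard =
      2 * (Fintype.card β * G.edgeSet.ncard + Fintype.card α * H.edgeSet.ncard) := by
    rw [ncard_edgeSet_eq_card_edgeFinset, ← sum_degrees_eq_twice_card_edges]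
    trans ∑ x : α × β, (G.degree x.1 + H.degree x.2)
    · exact sum_congr rfl fun x _ => by convert degree_boxProd x
    rw [Fintype.sum_prod_type' (f := fun a b => G.degree a + H.degree b)]
    simp only [sum_add_distrib, sum_const, card_univ, smul_eq_mul, ← mul_sum]
    rw [sum_degrees_eq_twice_card_edges, sum_degrees_eq_twice_card_edges,
      ncard_edgeSet_eq_card_edgeFinset, ncard_edgeSet_eq_card_edgeFinset]
    ring
  omega

end SimpleGraph

theorem mc_boxProd_of_tree_of_tree_general {α β : Type*} [Fintype α] [Fintype β]
    (G : SimpleGraph α) (H : SimpleGraph β)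
    (hGt : G.IsTree) (hHt : H.IsTree)
    (hGe : G.edgeSet.Nonempty) :
    G.edgeSet.ncard * H.edgeSet.ncard + 1 ≤ (G.boxProd H).mc ∧
      (G.boxProd H).mc ≤ G.edgeSet.ncard * H.edgeSet.ncard + 2 := by
  have hconn : (G □ H).Connected := hGt.connected.boxProd hHt.connected
  have hn : Fintype.card (α × β) = Fintype.card α * Fintype.card β := Fintype.card_prod α β
  have hm := ncard_edgeSet_boxProd G H
  have hp := hGt.ncard_edgeSet_add_one
  have hq := hHt.ncard_edgeSet_add_one
  have ha : 1 ≤ G.edgeSet.ncard := (Set.ncard_pos (Set.toFinite _)).mpr hGe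
  have : Nontrivial α := Fintype.one_lt_card_iff_nontrivial.mp (by omega)
  have : Nonempty β := hHt.connected.nonempty
  have hlow := hconn.add_two_le_mc_add_card
  have hup := hconn.card_sub_one_mul_le
  rw [hn, hm, ← hp, ← hq] at hlow hup
  set a := G.edgeSet.ncard
  set b := H.edgeSet.ncard
  set t := (G □ H).mc
  have hn1 : (a + 1) * (b + 1) - 1 = a * b + a + b := by
    rw [show (a + 1) * (b + 1) = a * b + a + b + 1 by ring, Nat.add_sub_cancel]
  rw [hn1] at hup
  constructor
  · nlinarith
  · nlinarith

/-- Theorem 2.1(3): if both `G` and `H` are trees (with at least one edge each), then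
`|E(G)||E(H)| + 1 ≤ mc(G □ H) ≤ |E(G)||E(H)| + 2`. -/
theorem mc_boxProd_of_tree_of_tree {α β : Type*} [Fintype α] [Fintype β]
    (G : SimpleGraph α) (H : SimpleGraph β)
    (hGt : G.IsTree) (hHt : H.IsTree)
    (hGe : G.edgeSet.Nonempty) (hHe : H.edgeSet.Nonempty) :
    G.edgeSet.ncard * H.edgeSet.ncard + 1 ≤ (G.boxProd H).mc ∧
      (G.boxProd H).mc ≤ G.edgeSet.ncard * H.edgeSet.ncard + 2 :=
  mc_boxProd_of_tree_of_tree_general G H hGt hHt hGe
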